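/- An instance A is a PCWA-core if and only if there exists an atom k of A such that every endomorphism f of A whose image contains k is an isomorphism. -/
import Mathlib


/-- An atom (fact): relation name together with a tuple of values. -/
abbrev Atom : Type := ℕ × List ℕ

/-- A (finite) instance: a finite set of atoms. -/
@[ext] structure Inst where
  atoms : Finset Atom
deriving DecidableEq

/-- The active domain of an instance. -/
def adom (A : Inst) : Set ℕ := {x | ∃ a ∈ A.atoms, x ∈ a.2}

/-- The action of a map on values extended to atoms. -/
def mapAtom (h : ℕ → ℕ) (a : Atom) : Atom := (a.1, a.2.map h)

/-- A homomorphism between instances, fixing the constants `Cst`. -/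
structure Hom (Cst : Set ℕ) (A B : Inst) where
  toFun : ℕ → ℕ
  fixes : ∀ c ∈ Cst, toFun c = c
  maps : ∀ a ∈ A.atoms, mapAtom toFun a ∈ B.atoms

/-- Composition of homomorphisms. -/
def Hom.comp {Cst : Set ℕ} {A B C : Inst} (g : Hom Cst B C) (f : Hom Cst A B) :
    Hom Cst A C where
  toFun := g.toFun ∘ f.toFun
  fixes := by intro c hc; simp [f.fixes c hc, g.fixes c hc]
  maps := by
    intro a ha
    have := g.maps _ (f.maps a ha)
    simpa [mapAtom, List.map_map] using this

/-- A homomorphism is an isomorphism if it has a two-sided inverse on active domains. -/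
def IsIso {Cst : Set ℕ} {A B : Inst} (h : Hom Cst A B) : Prop :=
  ∃ g : Hom Cst B A,
    (∀ x ∈ adom A, g.toFun (h.toFun x) = x) ∧ (∀ x ∈ adom B, h.toFun (g.toFun x) = x)

/-- Two instances are isomorphic. -/
def Isomorphic (Cst : Set ℕ) (A B : Inst) : Prop := ∃ h : Hom Cst A B, IsIso h

/-- A set of homomorphisms is a cover if every atom of the codomain is hit. -/
def IsCover {Cst : Set ℕ} {A B : Inst} (H : Set (Hom Cst A B)) : Prop :=
  ∀ b ∈ B.atoms, ∃ h ∈ H, ∃ a ∈ A.atoms, mapAtom h.toFun a = b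

/-- PCWA-equivalence: covers exist in both directions. -/
def PCWAEquiv (Cst : Set ℕ) (A B : Inst) : Prop :=
  (∃ H : Set (Hom Cst A B), IsCover H) ∧ (∃ G : Set (Hom Cst B A), IsCover G)

/-- `A` is a PCWA-core if every self-cover contains an isomorphism. -/
def PCWACore (Cst : Set ℕ) (A : Inst) : Prop :=
  ∀ H : Set (Hom Cst A A), IsCover H → ∃ h ∈ H, IsIso h

/-- `C` is a reflective subinstance of `B` (up to isomorphism):
an injective homomorphism `m : C → B` with a retraction `q : B → C`. -/
def ReflSub (Cst : Set ℕ) (C B : Inst) : Prop :=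
  ∃ m : Hom Cst C B, ∃ q : Hom Cst B C,
    Set.InjOn m.toFun (adom C) ∧ ∀ x ∈ adom C, q.toFun (m.toFun x) = x

/-- `C` is a strict reflective subinstance of `A`: an actual subinstance
together with a retraction that is the identity on `C`'s domain. -/
def StrictReflSub (Cst : Set ℕ) (C A : Inst) : Prop :=
  C.atoms ⊆ A.atoms ∧ ∃ q : Hom Cst A C, ∀ x ∈ adom C, q.toFun x = x

/-- `k` is an endomorphism-maximal atom of `A`. -/
def MaxAtom (Cst : Set ℕ) (A : Inst) (k : Atom) : Prop :=
  k ∈ A.atoms ∧ ∀ k' ∈ A.atoms, ∀ f : Hom Cst A A, mapAtom f.toFun k' = k →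
    ∃ g : Hom Cst A A, mapAtom g.toFun k = k'

/-- `C` is the core of `A` with respect to the atom `k`:
the least strict reflective subinstance of `A` containing `k`. -/
def IsCoreAt (Cst : Set ℕ) (A : Inst) (k : Atom) (C : Inst) : Prop :=
  StrictReflSub Cst C A ∧ k ∈ C.atoms ∧
    ∀ D : Inst, StrictReflSub Cst D A → k ∈ D.atoms → StrictReflSub Cst C D

/-- The inclusion homomorphism of a subinstance. -/
def inclHom (Cst : Set ℕ) {C A : Inst} (hsub : C.atoms ⊆ A.atoms) : Hom Cst C A where
  toFun := id
  fixes := fun _ _ => rfl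
  maps := by intro a ha; simpa [mapAtom] using hsub ha

/-- A strongly surjective homomorphism: every atom of the codomain is the image of an atom. -/
def StrongSurj {Cst : Set ℕ} {A B : Inst} (h : Hom Cst A B) : Prop :=
  ∀ b ∈ B.atoms, ∃ a ∈ A.atoms, mapAtom h.toFun a = b

/-- The image instance of `A` under the value map `f`. -/
def imageInst (f : ℕ → ℕ) (A : Inst) : Inst := ⟨A.atoms.image (mapAtom f)⟩

/-- The union of a finite family of instances. -/
def unionInst (F : Finset Inst) : Inst := ⟨F.sup Inst.atoms⟩

/-- The members of `F` share no nulls: any value in two distinct members is a constant. -/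
def nullsDisjoint (Cst : Set ℕ) (F : Finset Inst) : Prop :=
  ∀ E ∈ F, ∀ E' ∈ F, E ≠ E' → adom E ∩ adom E' ⊆ Cst

/-- `F` is the multicore of `A`: each member is (isomorphic to) a core of `A`
at some maximal atom, every core at a maximal atom is a reflective subinstance
of some member, and no member is a reflective subinstance of another. -/
def IsMulticore (Cst : Set ℕ) (A : Inst) (F : Finset Inst) : Prop :=
  (∀ E ∈ F, ∃ k C, MaxAtom Cst A k ∧ IsCoreAt Cst A k C ∧ Isomorphic Cst E C) ∧
  (∀ k C, MaxAtom Cst A k → IsCoreAt Cst A k C → ∃ E ∈ F, ReflSub Cst C E) ∧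
  (∀ E ∈ F, ∀ E' ∈ F, ReflSub Cst E E' → E = E')

/-- `A` is a PCWA-core iff some atom `k` is hit only by isomorphisms. -/
theorem pcwa_core_iff_special_atom (Cst : Set ℕ) (A : Inst) :
    PCWACore Cst A ↔
      ∃ k ∈ A.atoms, ∀ f : Hom Cst A A,
        (∃ a ∈ A.atoms, mapAtom f.toFun a = k) → IsIso f := by
  constructor
  · intro hcore
    by_contra hno
    push_neg at hno
    have hcov : IsCover {f : Hom Cst A A | ¬ IsIso f} := by
      intro k hk
      obtain ⟨f, hhit, hniso⟩ := hno k hk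
      exact ⟨f, hniso, hhit⟩
    obtain ⟨h, hH, hiso⟩ := hcore _ hcov
    exact hH hiso
  · rintro ⟨k, hk, hspec⟩ H hcov
    obtain ⟨h, hH, a, ha, hmap⟩ := hcov k hk
    exact ⟨h, hH, hspec h ⟨a, ha, hmap⟩⟩
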